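/- arXiv:2502.01026 — 5 statements merged into one kernel-verified Lean document; each statement's English description precedes it below -/
import Mathlib

section
/- Let E be the elliptic curve over the rational function field ℚ(T) defined by the Weierstrass equation y² = x(x² − x + T). Then every point of the group E(ℚ(T)) of ℚ(T)-rational points has finite order; that is, the Mordell–Weil group E(ℚ(T)) has rank 0. -/
/-!
Write `y² = x (x² + c x + L)` over `K(T)`, with `L ∈ K[T]` linear of square leading coefficient.
If `x ≠ 0`, then `x = a / f²` in lowest terms, and unique factorisation in `K[T]` (together
with a comparison of leading coefficients, which is where the squareness of `lc L` enters)
produces a primitive solution of the quartic `n² = p⁴ + c p² q² + L q⁴` with `q ≠ 0`. The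
2-isogeny descent maps it to a primitive solution of the quartic attached to `(-2c, c² - 4L)`
with smaller `deg q`, and a second step returns to the original quartic, so by descent on
`deg q` there is no solution. Hence every affine point of `y² = x³ - x² + T x` is the 2-torsion
point `(0, 0)`.
-/

/-- The elliptic curve `E : y² = x(x² − x + T) = x³ − x² + Tx` over the rational
function field `ℚ(T)`. -/
noncomputable def zywinaCurve : WeierstrassCurve (RatFunc ℚ) :=
  { a₁ := 0, a₂ := -1, a₃ := 0, a₄ := RatFunc.X, a₆ := 0 }

section PID

variable {R : Type*} [CommRing R] [IsDomain R] [IsPrincipalIdealRing R]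

lemma exists_associated_pow_of_mul_eq_mul_pow {a b M q : R} {k : ℕ} (hk : k ≠ 0) (hM : M ≠ 0)
    (hco : IsCoprime a b) (h : a * b = M * q ^ k) (hMa : M ∣ a) :
    ∃ e, Associated (e ^ k) b ∧ e ∣ q := by
  obtain ⟨a', rfl⟩ := hMa
  have h' : b * a' = q ^ k := mul_left_cancel₀ hM (by rw [← h]; ring)
  obtain ⟨e, he⟩ := exists_associated_pow_of_mul_eq_pow' hco.of_mul_left_right.symm h'
  exact ⟨e, he, (UniqueFactorizationMonoid.pow_dvd_pow_iff_dvd hk).mp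
    (he.dvd.trans ⟨a', h'.symm⟩)⟩

lemma isCoprime_sub_add_of_mul_eq {a b M q : R} {k : ℕ} (h2 : IsUnit (2 : R)) (hM : Prime M)
    (hbq : IsCoprime b q) (h : (a - b) * (a + b) = M * q ^ k) : IsCoprime (a - b) (a + b) := by
  have h2b : (a + b) - (a - b) = 2 * b := by ring
  refine isCoprime_of_prime_dvd ?_ fun π hπ hπu hπw => ?_
  · rintro ⟨hu, hw⟩
    rw [hu, hw, sub_zero, eq_comm, h2.mul_right_eq_zero] at h2b
    rw [h2b, isCoprime_zero_left] at hbq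
    rw [hu, zero_mul, eq_comm] at h
    exact hbq.ne_zero (eq_zero_of_pow_eq_zero ((mul_eq_zero.mp h).resolve_left hM.ne_zero))
  have hπb : π ∣ b := (h2.dvd_mul_left).mp (h2b ▸ dvd_sub hπw hπu)
  have hπq : π ∣ q := by
    rcases hπ.dvd_or_dvd (h ▸ dvd_mul_of_dvd_left hπu _) with hπM | hπq
    · have hMπ : M ∣ π := (hπ.associated_of_dvd hM hπM).symm.dvd
      have hMM : M * M ∣ M * q ^ k := h ▸ mul_dvd_mul (hMπ.trans hπu) (hMπ.trans hπw)
      exact hπM.trans (hM.dvd_of_dvd_pow ((mul_dvd_mul_iff_left hM.ne_zero).mp hMM))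
    · exact hπ.dvd_of_dvd_pow hπq
  exact hπ.not_isUnit (hbq.isUnit_of_dvd' hπb hπq)

end PID

open Polynomial

namespace Polynomial

variable {K : Type*} [Field K]

lemma isUnit_two [NeZero (2 : K)] : IsUnit (2 : K[X]) := by
  rw [← C_ofNat]
  exact isUnit_C.mpr (Ne.isUnit two_ne_zero)

lemma exists_eq_sq_of_associated_sq {a m : K[X]} (h : Associated (m ^ 2) a)
    (hlc : IsSquare a.leadingCoeff) : ∃ γ : K, a = (C γ * m) ^ 2 := by
  obtain ⟨u, rfl⟩ := h
  obtain ⟨κ, -, hκ⟩ := isUnit_iff.mp u.isUnit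
  rcases eq_or_ne m 0 with rfl | hm
  · exact ⟨0, by simp⟩
  obtain ⟨s, hs⟩ := hlc
  have hlm : m.leadingCoeff ≠ 0 := leadingCoeff_ne_zero.mpr hm
  have hκs : κ = (s / m.leadingCoeff) ^ 2 := by
    rw [← hκ, leadingCoeff_mul, leadingCoeff_pow, leadingCoeff_C] at hs
    field_simp
    linear_combination hs
  exact ⟨s / m.leadingCoeff, by rw [← hκ, hκs, map_pow]; ring⟩

lemma exists_sq_of_isCoprime_of_mul_eq_sq {a g b : K[X]} (hco : IsCoprime a g)
    (h : a * g = b ^ 2) (hg : g ≠ 0) (hlc : IsSquare g.leadingCoeff) :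
    ∃ m n : K[X], a = m ^ 2 ∧ g = n ^ 2 := by
  obtain ⟨s, hs⟩ := hlc
  have hs0 : s ≠ 0 := by
    rintro rfl
    exact leadingCoeff_ne_zero.mpr hg (by rw [hs, mul_zero])
  have hlca : IsSquare a.leadingCoeff := by
    refine ⟨b.leadingCoeff / s, ?_⟩
    have hlc := congrArg leadingCoeff h
    rw [leadingCoeff_mul, leadingCoeff_pow, hs] at hlc
    field_simp
    linear_combination hlc
  obtain ⟨m, hm⟩ := exists_associated_pow_of_mul_eq_pow' hco h
  obtain ⟨n, hn⟩ := exists_associated_pow_of_mul_eq_pow' hco.symm ((mul_comm g a).trans h)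
  obtain ⟨γ, hγ⟩ := exists_eq_sq_of_associated_sq hm hlca
  obtain ⟨δ, hδ⟩ := exists_eq_sq_of_associated_sq hn ⟨s, hs⟩
  exact ⟨_, _, hγ, hδ⟩

/-- If `M ∣ w`, then `u` is a fourth power up to a unit, so `w` would have odd degree. -/
lemma dvd_of_mul_eq_mul_pow_four {u w M q : K[X]} (hM : Prime M) (hMdeg : M.natDegree = 1)
    (hq : q ≠ 0) (hco : IsCoprime u w) (h : u * w = M * q ^ 4) (hw : Even w.natDegree) :
    M ∣ u := by
  refine (hM.dvd_or_dvd ⟨q ^ 4, h⟩).resolve_right fun hMw => ?_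
  obtain ⟨e, he, -⟩ := exists_associated_pow_of_mul_eq_mul_pow four_ne_zero hM.ne_zero hco.symm
    ((mul_comm w u).trans h) hMw
  have huw0 : u * w ≠ 0 := h ▸ mul_ne_zero hM.ne_zero (pow_ne_zero 4 hq)
  have hdeg := congrArg natDegree h
  rw [natDegree_mul (left_ne_zero_of_mul huw0) (right_ne_zero_of_mul huw0),
    natDegree_mul hM.ne_zero (pow_ne_zero 4 hq),
    ← natDegree_eq_of_degree_eq (degree_eq_degree_of_associated he), natDegree_pow,
    natDegree_pow, hMdeg] at hdeg
  obtain ⟨r, hr⟩ := hw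
  omega

lemma natDegree_C_mul_mul_le (c : K) (x z : K[X]) :
    (C c * x * z).natDegree ≤ x.natDegree + z.natDegree :=
  natDegree_mul_le.trans (add_le_add_left (natDegree_C_mul_le c x) _)

end Polynomial

lemma RatFunc.num_eq_mul_denom {K : Type*} [Field K] (x : RatFunc K) :
    algebraMap K[X] (RatFunc K) x.num = x * algebraMap K[X] (RatFunc K) x.denom :=
  (div_eq_iff (RatFunc.algebraMap_ne_zero x.denom_ne_zero)).mp (RatFunc.num_div_denom x)

namespace TwoDescent

variable {K : Type*} [Field K] {c : K} {L x z : K[X]}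

/-- For `x = a / f ^ 2` one has `x (x ^ 2 + c x + L) = a * quadForm c L a (f ^ 2) / f ^ 6`. -/
noncomputable def quadForm (c : K) (L x z : K[X]) : K[X] :=
  x ^ 2 + C c * x * z + L * z ^ 2

lemma natDegree_quadForm_of_lt (hL : L.natDegree ≤ 1) (h : z.natDegree < x.natDegree) :
    (quadForm c L x z).natDegree = 2 * x.natDegree ∧
      (quadForm c L x z).leadingCoeff = x.leadingCoeff ^ 2 := by
  have hrest : (C c * x * z + L * z ^ 2).natDegree < (x ^ 2).natDegree := by
    have hLz : (L * z ^ 2).natDegree ≤ 1 + 2 * z.natDegree :=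
      natDegree_mul_le.trans (add_le_add hL natDegree_pow_le)
    rw [natDegree_pow]
    refine (natDegree_add_le _ _).trans_lt (max_lt ?_ ?_)
    · exact (natDegree_C_mul_mul_le c x z).trans_lt (by omega)
    · omega
  rw [quadForm, add_assoc, natDegree_add_eq_left_of_natDegree_lt hrest,
    leadingCoeff_add_of_degree_lt' (degree_lt_degree hrest), natDegree_pow, leadingCoeff_pow]
  exact ⟨rfl, rfl⟩

lemma natDegree_quadForm_of_le (hL : L.natDegree = 1) (hz : z ≠ 0)
    (h : x.natDegree ≤ z.natDegree) :
    (quadForm c L x z).natDegree = 2 * z.natDegree + 1 ∧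
      (quadForm c L x z).leadingCoeff = L.leadingCoeff * z.leadingCoeff ^ 2 := by
  have hL0 : L ≠ 0 := by rintro rfl; simp at hL
  have hLz : (L * z ^ 2).natDegree = 2 * z.natDegree + 1 := by
    rw [natDegree_mul hL0 (pow_ne_zero 2 hz), natDegree_pow, hL, add_comm]
  have hrest : (x ^ 2 + C c * x * z).natDegree < (L * z ^ 2).natDegree := by
    rw [hLz]
    refine (natDegree_add_le _ _).trans_lt (max_lt ?_ ?_)
    · rw [natDegree_pow]; omega
    · exact (natDegree_C_mul_mul_le c x z).trans_lt (by omega)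
  rw [quadForm, natDegree_add_eq_right_of_natDegree_lt hrest,
    leadingCoeff_add_of_degree_lt (degree_lt_degree hrest), hLz, leadingCoeff_mul,
    leadingCoeff_pow]
  exact ⟨rfl, rfl⟩

lemma quadForm_ne_zero (hL : L.natDegree = 1) (hz : z ≠ 0) : quadForm c L x z ≠ 0 := by
  intro h0
  rcases lt_or_ge z.natDegree x.natDegree with h | h
  · have hx : x ≠ 0 := by rintro rfl; simp at h
    have := (natDegree_quadForm_of_lt (c := c) hL.le h).2
    rw [h0, leadingCoeff_zero] at this
    exact pow_ne_zero 2 (leadingCoeff_ne_zero.mpr hx) this.symm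
  · have := (natDegree_quadForm_of_le (c := c) hL hz h).1
    rw [h0, natDegree_zero] at this
    omega

lemma isSquare_leadingCoeff_quadForm (hL : L.natDegree = 1) (hLsq : IsSquare L.leadingCoeff)
    (hz : z ≠ 0) : IsSquare (quadForm c L x z).leadingCoeff := by
  rcases lt_or_ge z.natDegree x.natDegree with h | h
  · rw [(natDegree_quadForm_of_lt hL.le h).2]
    exact IsSquare.sq _
  · rw [(natDegree_quadForm_of_le hL hz h).2]
    exact hLsq.mul (IsSquare.sq _)

lemma natDegree_lt_of_sq_eq_quadForm {n p q : K[X]} (hL : L.natDegree = 1) (hq : q ≠ 0)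
    (h : n ^ 2 = quadForm c L (p ^ 2) (q ^ 2)) : q.natDegree < p.natDegree := by
  by_contra! hle
  have hodd := (natDegree_quadForm_of_le (c := c) (x := p ^ 2) hL (pow_ne_zero 2 hq)
    (by simpa only [natDegree_pow] using Nat.mul_le_mul_left 2 hle)).1
  rw [← h, natDegree_pow, natDegree_pow] at hodd
  omega

lemma exists_sq_eq_sq_of_leadingCoeff_sq {n : K[X]} {s : K} (h : n.leadingCoeff ^ 2 = s ^ 2) :
    ∃ N : K[X], N ^ 2 = n ^ 2 ∧ N.leadingCoeff = s := by
  rcases sq_eq_sq_iff_eq_or_eq_neg.mp h with hs | hs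
  · exact ⟨n, rfl, hs⟩
  · exact ⟨-n, neg_sq n, by rw [leadingCoeff_neg, hs, neg_neg]⟩

lemma natDegree_four_mul_sub_C_sq [NeZero (2 : K)] (hL : L.natDegree = 1) :
    (4 * L - C c ^ 2).natDegree = 1 := by
  rw [← C_ofNat, ← map_pow, natDegree_sub_C, natDegree_C_mul ?_, hL]
  exact (show (4 : K) = 2 * 2 by norm_num) ▸ mul_ne_zero two_ne_zero two_ne_zero

lemma natDegree_C_sq_sub_four_mul [NeZero (2 : K)] (hL : L.natDegree = 1) :
    (C c ^ 2 - 4 * L).natDegree = 1 := by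
  rw [← neg_sub, natDegree_neg, natDegree_four_mul_sub_C_sq hL]

lemma prime_four_mul_sub_C_sq [NeZero (2 : K)] (hL : L.natDegree = 1) :
    Prime (4 * L - C c ^ 2) :=
  prime_of_degree_eq_one <|
    (degree_eq_iff_natDegree_eq_of_pos one_pos).mpr (natDegree_four_mul_sub_C_sq hL)

lemma natDegree_two_mul_add_of_leadingCoeff_eq [NeZero (2 : K)] {N p q : K[X]}
    (hqp : q.natDegree < p.natDegree) (hN : N.natDegree = 2 * p.natDegree)
    (hNlc : N.leadingCoeff = p.leadingCoeff ^ 2) :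
    (2 * N + (2 * p ^ 2 + C c * q ^ 2)).natDegree = 2 * p.natDegree ∧
      (2 * N + (2 * p ^ 2 + C c * q ^ 2)).leadingCoeff = (2 * p.leadingCoeff) ^ 2 := by
  have hp : p ≠ 0 := by rintro rfl; simp at hqp
  have hcoeff : (2 * N + (2 * p ^ 2 + C c * q ^ 2)).coeff (2 * p.natDegree) =
      (2 * p.leadingCoeff) ^ 2 := by
    have hq2 : (q ^ 2).coeff (2 * p.natDegree) = 0 :=
      coeff_eq_zero_of_natDegree_lt (by rw [natDegree_pow]; omega)
    rw [coeff_add, coeff_add, ← C_ofNat, coeff_C_mul, coeff_C_mul, coeff_C_mul, hq2, ← hN,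
      coeff_natDegree, hNlc, hN, ← natDegree_pow, coeff_natDegree, leadingCoeff_pow]
    ring
  have hle : (2 * N + (2 * p ^ 2 + C c * q ^ 2)).natDegree ≤ 2 * p.natDegree := by
    rw [← C_ofNat]
    refine (natDegree_add_le _ _).trans (max_le ?_ ((natDegree_add_le _ _).trans (max_le ?_ ?_)))
    · exact (natDegree_C_mul_le _ _).trans hN.le
    · exact (natDegree_C_mul_le _ _).trans natDegree_pow_le
    · exact (natDegree_C_mul_le _ _).trans (natDegree_pow_le.trans (by omega))
  have hdeg := natDegree_eq_of_le_of_coeff_ne_zero hle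
    (hcoeff ▸ pow_ne_zero 2 (mul_ne_zero two_ne_zero (leadingCoeff_ne_zero.mpr hp)))
  exact ⟨hdeg, by rw [leadingCoeff, hdeg, hcoeff]⟩

lemma exists_isCoprime_mul_eq_of_sq_eq_quadForm [NeZero (2 : K)] {n p q : K[X]}
    (hL : L.natDegree = 1) (hq : q ≠ 0) (hpq : IsCoprime p q)
    (h : n ^ 2 = quadForm c L (p ^ 2) (q ^ 2)) :
    ∃ u w : K[X], u * w = (4 * L - C c ^ 2) * q ^ 4 ∧ w - u = 2 * (2 * p ^ 2 + C c * q ^ 2) ∧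
      IsCoprime u w ∧ w.natDegree = 2 * p.natDegree ∧
      w.leadingCoeff = (2 * p.leadingCoeff) ^ 2 := by
  have hqp := natDegree_lt_of_sq_eq_quadForm hL hq h
  have hF := natDegree_quadForm_of_lt (c := c) (L := L) hL.le
    (show (q ^ 2).natDegree < (p ^ 2).natDegree by rw [natDegree_pow, natDegree_pow]; omega)
  obtain ⟨N, hN, hNlc⟩ := exists_sq_eq_sq_of_leadingCoeff_sq (n := n) (s := p.leadingCoeff ^ 2)
    (by rw [← leadingCoeff_pow, h, hF.2, leadingCoeff_pow])
  have hNdeg : N.natDegree = 2 * p.natDegree := by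
    have := congrArg natDegree (hN.trans h)
    rw [natDegree_pow, hF.1, natDegree_pow] at this
    omega
  have hVq : IsCoprime (2 * p ^ 2 + C c * q ^ 2) q := by
    have h2p : IsCoprime (2 * p ^ 2) q :=
      (isCoprime_mul_unit_left_left isUnit_two _ _).mpr hpq.pow_left
    simpa only [sq, mul_assoc] using h2p.add_mul_right_left (C c * q)
  have huw : (2 * N - (2 * p ^ 2 + C c * q ^ 2)) * (2 * N + (2 * p ^ 2 + C c * q ^ 2)) =
      (4 * L - C c ^ 2) * q ^ 4 := by
    rw [quadForm] at h
    linear_combination 4 * (hN.trans h)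
  obtain ⟨hwdeg, hwlc⟩ := natDegree_two_mul_add_of_leadingCoeff_eq (c := c) hqp hNdeg hNlc
  exact ⟨_, _, huw, by ring,
    isCoprime_sub_add_of_mul_eq isUnit_two (prime_four_mul_sub_C_sq hL) hVq huw, hwdeg, hwlc⟩

theorem descent_step [NeZero (2 : K)] {n p q : K[X]} (hL : L.natDegree = 1) (hq : q ≠ 0)
    (hpq : IsCoprime p q) (h : n ^ 2 = quadForm c L (p ^ 2) (q ^ 2)) :
    ∃ n' p' q' : K[X], q' ≠ 0 ∧ IsCoprime p' q' ∧ q'.natDegree < q.natDegree ∧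
      n' ^ 2 = quadForm (-2 * c) (C c ^ 2 - 4 * L) (p' ^ 2) (q' ^ 2) := by
  have hqp := natDegree_lt_of_sq_eq_quadForm hL hq h
  obtain ⟨u, w, huw, hwu, hco, hwdeg, hwlc⟩ :=
    exists_isCoprime_mul_eq_of_sq_eq_quadForm hL hq hpq h
  have hM := prime_four_mul_sub_C_sq (c := c) hL
  have hMu : 4 * L - C c ^ 2 ∣ u := dvd_of_mul_eq_mul_pow_four hM
    (natDegree_four_mul_sub_C_sq hL) hq hco huw ⟨p.natDegree, by omega⟩
  obtain ⟨e, he, d, rfl⟩ :=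
    exists_associated_pow_of_mul_eq_mul_pow four_ne_zero hM.ne_zero hco huw hMu
  have he0 : e ≠ 0 := left_ne_zero_of_mul hq
  have hd0 : d ≠ 0 := right_ne_zero_of_mul hq
  have hedeg : 0 < e.natDegree := by
    have := natDegree_eq_of_degree_eq (degree_eq_degree_of_associated he)
    rw [natDegree_pow, hwdeg] at this
    omega
  obtain ⟨γ, hγ⟩ := exists_eq_sq_of_associated_sq (m := e ^ 2) (by rwa [← pow_mul])
    (hwlc ▸ IsSquare.sq _)
  have hγ0 : γ ≠ 0 := by
    rintro rfl
    exact right_ne_zero_of_mul (huw ▸ mul_ne_zero hM.ne_zero (pow_ne_zero 4 hq))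
      (by simpa using hγ)
  have hγunit : IsUnit (C γ) := isUnit_C.mpr hγ0.isUnit
  have hu : C γ ^ 2 * u = (4 * L - C c ^ 2) * d ^ 4 :=
    mul_left_cancel₀ (pow_ne_zero 4 he0) (by linear_combination huw - u * hγ)
  have hde : IsCoprime d e := by
    have hdu : d ∣ u := (hγunit.pow 2).dvd_mul_left.mp
      (hu ▸ dvd_mul_of_dvd_right (dvd_pow_self d four_ne_zero) _)
    have hew : e ∣ w := hγ ▸ ⟨C γ ^ 2 * e ^ 3, by ring⟩
    exact (hco.of_isCoprime_of_dvd_left hdu).of_isCoprime_of_dvd_right hew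
  refine ⟨2 * C γ * p, C γ * e, d, hd0, (isCoprime_mul_unit_left_left hγunit e d).mpr hde.symm,
    by rw [natDegree_mul he0 hd0]; omega, ?_⟩
  rw [quadForm, C_mul, C_neg, C_ofNat]
  linear_combination (-C γ ^ 2) * hwu + C γ ^ 2 * hγ - hu

/-- Two descent steps lead from `(c, L)` to `(4c, 16L)`, which is `(c, L)` again after the
substitution `q ↦ 2q`; so the degree of `q` can be lowered indefinitely. -/
theorem sq_ne_quadForm [NeZero (2 : K)] (hL : L.natDegree = 1) {n p q : K[X]} (hq : q ≠ 0)
    (hpq : IsCoprime p q) : n ^ 2 ≠ quadForm c L (p ^ 2) (q ^ 2) := by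
  induction hk : q.natDegree using Nat.strong_induction_on generalizing n p q with
  | _ k ih =>
  intro h
  obtain ⟨n₁, p₁, q₁, hq₁, hpq₁, hlt₁, h₁⟩ := descent_step hL hq hpq h
  obtain ⟨n₂, p₂, q₂, hq₂, hpq₂, hlt₂, h₂⟩ :=
    descent_step (natDegree_C_sq_sub_four_mul hL) hq₁ hpq₁ h₁
  have h2 : IsUnit (C (2 : K)) := isUnit_C.mpr (Ne.isUnit two_ne_zero)
  refine ih q₂.natDegree (hk ▸ hlt₂.trans hlt₁) (n := n₂) (mul_ne_zero h2.ne_zero hq₂)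
    ((isCoprime_mul_unit_left_right h2 _ _).mpr hpq₂)
    (natDegree_C_mul two_ne_zero) ?_
  rw [h₂]
  simp only [quadForm, map_mul, map_neg, C_ofNat]
  ring

theorem exists_sq_eq_quadForm_of_sq_eq_mul {a b f : K[X]} (hL : L.natDegree = 1)
    (hLsq : IsSquare L.leadingCoeff) (ha : a ≠ 0) (hf : f ≠ 0) (haf : IsCoprime a f)
    (h : b ^ 2 = a * quadForm c L a (f ^ 2)) :
    ∃ n p q : K[X], q ≠ 0 ∧ IsCoprime p q ∧ n ^ 2 = quadForm c L (p ^ 2) (q ^ 2) := by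
  have hLp : Prime L := prime_of_degree_eq_one <|
    (degree_eq_iff_natDegree_eq_of_pos one_pos).mpr hL
  by_cases hLa : L ∣ a
  · obtain ⟨a₁, rfl⟩ := hLa
    have ha₁ : a₁ ≠ 0 := right_ne_zero_of_mul ha
    obtain ⟨b₁, rfl⟩ : L ∣ b :=
      hLp.dvd_of_dvd_pow (n := 2) ⟨a₁ * quadForm c L (L * a₁) (f ^ 2), by rw [h]; ring⟩
    have h₁ : a₁ * quadForm c L (f ^ 2) a₁ = b₁ ^ 2 := by
      refine mul_left_cancel₀ (pow_ne_zero 2 hLp.ne_zero) ?_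
      rw [quadForm] at h ⊢
      linear_combination -h
    have hco : IsCoprime a₁ (quadForm c L (f ^ 2) a₁) := by
      rw [show quadForm c L (f ^ 2) a₁ = f ^ 4 + a₁ * (C c * f ^ 2 + L * a₁) by
        rw [quadForm]; ring, IsCoprime.add_mul_left_right_iff]
      exact (haf.of_mul_left_right).pow_right
    obtain ⟨m, k, rfl, hk⟩ := exists_sq_of_isCoprime_of_mul_eq_sq hco h₁
      (quadForm_ne_zero hL ha₁) (isSquare_leadingCoeff_quadForm hL hLsq ha₁)
    exact ⟨k, f, m, pow_ne_zero_iff two_ne_zero |>.mp ha₁,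
      ((IsCoprime.pow_left_iff two_pos).mp haf.of_mul_left_right).symm, hk.symm⟩
  · have hco : IsCoprime a (quadForm c L a (f ^ 2)) := by
      rw [show quadForm c L a (f ^ 2) = L * f ^ 4 + a * (a + C c * f ^ 2) by
        rw [quadForm]; ring, IsCoprime.add_mul_left_right_iff]
      exact ((hLp.coprime_iff_not_dvd.mpr hLa).symm).mul_right haf.pow_right
    obtain ⟨m, k, rfl, hk⟩ := exists_sq_of_isCoprime_of_mul_eq_sq hco h.symm
      (quadForm_ne_zero hL (pow_ne_zero 2 hf))
      (isSquare_leadingCoeff_quadForm hL hLsq (pow_ne_zero 2 hf))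
    exact ⟨k, m, f, hf, (IsCoprime.pow_left_iff two_pos).mp haf, hk.symm⟩

theorem exists_sq_eq_mul_quadForm_of_monic {A B D E : K[X]} (hD : D.Monic) (hE : E.Monic)
    (hAD : IsCoprime A D) (hBE : IsCoprime B E)
    (h : B ^ 2 * D ^ 3 = E ^ 2 * (A * quadForm c L A D)) :
    ∃ f : K[X], f ≠ 0 ∧ IsCoprime A f ∧ B ^ 2 = A * quadForm c L A (f ^ 2) := by
  have hDF : IsCoprime D (A * quadForm c L A D) := by
    refine hAD.symm.mul_right ?_
    rw [show quadForm c L A D = A ^ 2 + D * (C c * A + L * D) by rw [quadForm]; ring,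
      IsCoprime.add_mul_left_right_iff]
    exact hAD.symm.pow_right
  have hED : E ^ 2 = D ^ 3 := by
    refine eq_of_monic_of_associated (hE.pow 2) (hD.pow 3) (associated_of_dvd_dvd ?_ ?_)
    · exact (hBE.pow (m := 2) (n := 2)).symm.dvd_of_dvd_mul_left ⟨_, h⟩
    · exact (hDF.pow_left (m := 3)).dvd_of_dvd_mul_right ⟨B ^ 2, by rw [← h]; ring⟩
  obtain ⟨f, rfl⟩ : D ∣ E := (UniqueFactorizationMonoid.pow_dvd_pow_iff_dvd two_ne_zero).mp
    ⟨D, by rw [hED]; ring⟩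
  have hD0 : D ≠ 0 := hD.ne_zero
  have hDf : D = f ^ 2 :=
    mul_left_cancel₀ (pow_ne_zero 2 hD0) (by linear_combination -hED)
  refine ⟨f, ?_, ?_, ?_⟩
  · rintro rfl
    exact hD0 (by rw [hDf]; ring)
  · exact (IsCoprime.pow_right_iff two_pos).mp (hDf ▸ hAD)
  · rw [← hDf]
    refine mul_left_cancel₀ (pow_ne_zero 3 hD0) ?_
    linear_combination h + A * quadForm c L A D * hED

theorem eq_zero_of_sq_eq_cubic [NeZero (2 : K)] (hL : L.natDegree = 1)
    (hLsq : IsSquare L.leadingCoeff) {x y : RatFunc K}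
    (h : y ^ 2 = x ^ 3 + RatFunc.C c * x ^ 2 + algebraMap K[X] (RatFunc K) L * x) : x = 0 := by
  by_contra hx
  have hcross : y.num ^ 2 * x.denom ^ 3 = y.denom ^ 2 * (x.num * quadForm c L x.num x.denom) := by
    apply RatFunc.algebraMap_injective K
    simp only [map_mul, map_pow, map_add, quadForm, RatFunc.algebraMap_C, RatFunc.num_eq_mul_denom]
    linear_combination
      (algebraMap K[X] (RatFunc K) y.denom ^ 2 * algebraMap K[X] (RatFunc K) x.denom ^ 3) * h
  obtain ⟨f, hf, hxf, hyx⟩ := exists_sq_eq_mul_quadForm_of_monic x.monic_denom y.monic_denom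
    x.isCoprime_num_denom y.isCoprime_num_denom hcross
  obtain ⟨n, p, q, hq, hpq, hn⟩ :=
    exists_sq_eq_quadForm_of_sq_eq_mul hL hLsq (RatFunc.num_ne_zero hx) hf hxf hyx
  exact sq_ne_quadForm hL hq hpq hn

end TwoDescent

lemma zywinaCurve_Δ :
    zywinaCurve.Δ = algebraMap ℚ[X] (RatFunc ℚ) (16 * X ^ 2 - 64 * X ^ 3) := by
  simp only [WeierstrassCurve.Δ, WeierstrassCurve.b₂, WeierstrassCurve.b₄,
    WeierstrassCurve.b₆, WeierstrassCurve.b₈, zywinaCurve, map_sub, map_mul, map_pow, map_ofNat,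
    RatFunc.algebraMap_X]
  ring

lemma zywinaCurve_Δ_ne_zero : zywinaCurve.Δ ≠ 0 := by
  rw [zywinaCurve_Δ]
  refine RatFunc.algebraMap_ne_zero fun h => ?_
  have := congrArg (eval 1) h
  norm_num at this

open scoped Classical in
lemma zywinaCurve_two_nsmul (P : zywinaCurve.toAffine.Point) : 2 • P = 0 := by
  cases P with
  | zero => exact nsmul_zero 2
  | @some x y hP =>
    have heq := (WeierstrassCurve.Affine.equation_iff x y).mp hP.1
    simp only [zywinaCurve] at heq
    have hx : x = 0 := by
      refine TwoDescent.eq_zero_of_sq_eq_cubic (c := -1) (y := y) natDegree_X ⟨1, by simp⟩ ?_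
      rw [RatFunc.algebraMap_X, map_neg, map_one]
      linear_combination heq
    have hy : y = 0 := by
      subst hx
      exact pow_eq_zero_iff two_ne_zero |>.mp (by linear_combination heq)
    rw [two_nsmul]
    exact WeierstrassCurve.Affine.Point.add_self_of_Y_eq
      (by simp [hy, WeierstrassCurve.Affine.negY, zywinaCurve])

open scoped Classical in
/-- The elliptic curve `y² = x(x² − x + T)` over `ℚ(T)` has nonzero discriminant and
its Mordell–Weil group `E(ℚ(T))` has rank `0`, i.e. every `ℚ(T)`-point has finite order. -/
theorem zywinaCurve_rank_zero :
    zywinaCurve.Δ ≠ 0 ∧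
      ∀ P : zywinaCurve.toAffine.Point, IsOfFinAddOrder P :=
  ⟨zywinaCurve_Δ_ne_zero, fun P =>
    isOfFinAddOrder_iff_nsmul_eq_zero.mpr ⟨2, two_pos, zywinaCurve_two_nsmul P⟩⟩
end

section
/- Let m and n be positive integers, let d be a nonzero integer, and let p be a prime such that the p-adic valuation of d equals 1 and p does not divide m(m+2n). Then there is no pair (x, y) ∈ ℚ_p × ℚ_p satisfying y² = d·x⁴ + 2m²·x² − m³(m+2n)/d. -/
/-!
Multiplying by `d` and putting `u = d x²` turns the equation into
`d y² = u² + 2m² u − m³(m + 2n)`. Since `v(d) = 1`, the left side has odd valuation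
(or vanishes), and so has `u`; in particular `v(u) ≠ 0`. The constant term is a unit, so the
right side has valuation `0` when `v(u) > 0`, and valuation `2 v(u)` when `v(u) < 0`: it is
nonzero and of even valuation in both cases.
-/

section Ultrametric

variable {K : Type*} [NormedField K] [IsUltrametricDist K]

open IsUltrametricDist

lemma norm_add_eq_left_of_norm_lt {x y : K} (h : ‖y‖ < ‖x‖) : ‖x + y‖ = ‖x‖ := by
  rw [norm_add_eq_max_of_norm_ne_norm h.ne', max_eq_left h.le]

lemma norm_sq_add_mul_sub_of_norm_lt_one {u b c : K} (hb : ‖b‖ ≤ 1) (hc : ‖c‖ = 1)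
    (hu : ‖u‖ < 1) : ‖u ^ 2 + b * u - c‖ = 1 := by
  have hsmall : ‖u ^ 2 + b * u‖ < 1 := by
    refine (norm_add_le_max _ _).trans_lt (max_lt ?_ ?_)
    · rw [norm_pow]
      exact pow_lt_one₀ (norm_nonneg u) hu two_ne_zero
    · rw [norm_mul]
      exact mul_lt_one_of_nonneg_of_lt_one_right hb (norm_nonneg u) hu
  rw [sub_eq_neg_add, norm_add_eq_left_of_norm_lt (by rwa [norm_neg, hc]), norm_neg, hc]

lemma norm_sq_add_mul_sub_of_one_lt_norm {u b c : K} (hb : ‖b‖ ≤ 1) (hc : ‖c‖ ≤ 1)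
    (hu : 1 < ‖u‖) : ‖u ^ 2 + b * u - c‖ = ‖u‖ ^ 2 := by
  have hsmall : ‖b * u - c‖ < ‖u ^ 2‖ := by
    rw [sub_eq_add_neg, norm_pow]
    refine (norm_add_le_max _ _).trans_lt (max_lt ?_ ?_)
    · rw [norm_mul]
      calc ‖b‖ * ‖u‖ ≤ ‖u‖ := mul_le_of_le_one_left (norm_nonneg u) hb
        _ < ‖u‖ ^ 2 := lt_self_pow₀ hu one_lt_two
    · rw [norm_neg]
      exact hc.trans_lt (one_lt_pow₀ hu two_ne_zero)
  rw [add_sub_assoc, norm_add_eq_left_of_norm_lt hsmall, norm_pow]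

end Ultrametric

namespace Padic

variable {p : ℕ} [Fact p.Prime]

lemma norm_mul_sq_ne_norm_sq {d : ℚ_[p]} (hd : d.valuation = 1) (y : ℚ_[p]) {w : ℚ_[p]}
    (hw : w ≠ 0) : ‖d * y ^ 2‖ ≠ ‖w‖ ^ 2 := by
  have hd0 : d ≠ 0 := by
    rintro rfl
    simp at hd
  rcases eq_or_ne y 0 with rfl | hy
  · simpa [eq_comm] using hw
  have hp : (1 : ℝ) < p := mod_cast (Fact.out : p.Prime).one_lt
  rw [← norm_pow, norm_eq_zpow_neg_valuation (by positivity),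
    norm_eq_zpow_neg_valuation (by positivity), Ne,
    zpow_right_inj₀ (zero_lt_one.trans hp) hp.ne', valuation_mul hd0 (by positivity), hd,
    valuation_pow, valuation_pow]
  omega

end Padic

theorem no_padic_points_of_valuation_one_general (m n : ℕ)
    (d : ℤ) (p : ℕ) [hp : Fact p.Prime]
    (hval : padicValInt p d = 1) (hdvd : ¬ p ∣ m * (m + 2 * n)) :
    ¬ ∃ x y : ℚ_[p],
      y ^ 2 = (d : ℚ_[p]) * x ^ 4 + 2 * (m : ℚ_[p]) ^ 2 * x ^ 2 -
        (m : ℚ_[p]) ^ 3 * ((m : ℚ_[p]) + 2 * (n : ℚ_[p])) / (d : ℚ_[p]) := by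
  rintro ⟨x, y, h⟩
  have hvd : (d : ℚ_[p]).valuation = 1 := by simp [hval]
  have hd : (d : ℚ_[p]) ≠ 0 := by
    rintro h0
    simp [h0] at hvd
  have hb : ‖2 * (m : ℚ_[p]) ^ 2‖ ≤ 1 := mod_cast IsUltrametricDist.norm_natCast_le_one _ _
  have hc : ‖(m : ℚ_[p]) ^ 3 * (m + 2 * n)‖ = 1 := by
    have hcop := (Nat.Prime.coprime_iff_not_dvd hp.out).2 hdvd
    exact_mod_cast Padic.norm_natCast_eq_one_iff.2
      ((hcop.coprime_mul_right_right.pow_right 3).mul_right hcop.coprime_mul_left_right)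
  set u := (d : ℚ_[p]) * x ^ 2
  have hdy : (d : ℚ_[p]) * y ^ 2 = u ^ 2 + 2 * m ^ 2 * u - m ^ 3 * (m + 2 * n) := by
    rw [h]
    field_simp
    ring
  have hu : ‖u‖ ≠ ‖(1 : ℚ_[p])‖ ^ 2 := Padic.norm_mul_sq_ne_norm_sq hvd x one_ne_zero
  rw [norm_one, one_pow] at hu
  rcases hu.lt_or_gt with hu | hu
  · refine Padic.norm_mul_sq_ne_norm_sq hvd y one_ne_zero ?_
    rw [hdy, norm_sq_add_mul_sub_of_norm_lt_one hb hc hu, norm_one, one_pow]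
  · refine Padic.norm_mul_sq_ne_norm_sq hvd y (norm_pos_iff.mp (one_pos.trans hu)) ?_
    rw [hdy, norm_sq_add_mul_sub_of_one_lt_norm hb hc.le hu]

/-- Let `m` and `n` be positive integers, let `d` be a nonzero integer, and let `p` be a
prime such that the `p`-adic valuation of `d` is exactly `1` and `p` does not divide
`m(m + 2n)`.  Then the affine model `y² = d·x⁴ + 2m²·x² − m³(m+2n)/d` of the quartic
curve `C′_d` has no `ℚ_p`-rational points. -/
theorem no_padic_points_of_valuation_one (m n : ℕ) (hm : 0 < m) (hn : 0 < n)
    (d : ℤ) (hd : d ≠ 0) (p : ℕ) [hp : Fact p.Prime]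
    (hval : padicValInt p d = 1) (hdvd : ¬ p ∣ m * (m + 2 * n)) :
    ¬ ∃ x y : ℚ_[p],
      y ^ 2 = (d : ℚ_[p]) * x ^ 4 + 2 * (m : ℚ_[p]) ^ 2 * x ^ 2 -
        (m : ℚ_[p]) ^ 3 * ((m : ℚ_[p]) + 2 * (n : ℚ_[p])) / (d : ℚ_[p]) :=
  no_padic_points_of_valuation_one_general m n d p (hp := hp) hval hdvd
end

section
/- Let m and n be positive integers with m ≡ 3 (mod 8) and m+2n ≡ 3 (mod 8), and let d be an odd integer with d ≡ 3 (mod 8) or d ≡ 5 (mod 8). Then there is no pair (x, y) ∈ ℚ₂ × ℚ₂ satisfying y² = d·x⁴ + 2m²·x² − m³(m+2n)/d. -/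
/-!
Clearing the denominator gives `d y² + c = d² x⁴ + 2 d k x²` with `k = m²` odd and
`c = m³(m + 2n) ≡ 1 (mod 8)`; recall that every unit of `ℤ₂` squares to `1 (mod 8)`.
If `|x| < 1`, then `d y` is a unit with `(d y)² ≡ -d c (mod 8)`, so `d ≡ -1 (mod 8)`.
If `|x| > 1`, then `y / x²` is a unit whose square is `d (mod 8)`, so `d ≡ 1 (mod 8)`.
If `|x| = 1`, then `d² x⁴ ≡ c (mod 8)`, so `|d y²| = |2 d k x²| = 1/2`, which is impossible
for a square.
-/

namespace Padic

lemma norm_intCast_eq_one_of_odd {a : ℤ} (ha : Odd a) : ‖(a : ℚ_[2])‖ = 1 :=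
  norm_intCast_eq_one_iff.mpr (Int.isCoprime_two_right.mpr ha)

lemma norm_two : ‖(2 : ℚ_[2])‖ = 2⁻¹ := by
  exact_mod_cast norm_p (p := 2)

lemma norm_intCast_sub_le_iff_modEq (a b : ℤ) :
    ‖(a : ℚ_[2]) - b‖ ≤ 2 ^ (-3 : ℤ) ↔ a ≡ b [ZMOD 8] := by
  rw [← Int.cast_sub, Int.modEq_comm, Int.modEq_iff_dvd]
  exact_mod_cast norm_int_le_pow_iff_dvd (p := 2) (a - b) 3

end Padic

lemma PadicInt.norm_sq_sub_one_le_of_isUnit {z : ℤ_[2]} (hz : IsUnit z) :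
    ‖z ^ 2 - 1‖ ≤ 2 ^ (-3 : ℤ) := by
  have hunits : ∀ u : (ZMod (2 ^ 3))ˣ, (u : ZMod (2 ^ 3)) ^ 2 = 1 := by decide
  obtain ⟨u, hu⟩ := hz.map (toZModPow 3)
  rw [show ((2 : ℝ) ^ (-3 : ℤ)) = ((2 : ℕ) : ℝ) ^ (-(3 : ℕ) : ℤ) by norm_num,
    norm_le_pow_iff_mem_span_pow, ← ker_toZModPow, RingHom.mem_ker, map_sub, map_pow, map_one,
    ← hu, hunits, sub_self]

namespace Padic

lemma norm_sq_sub_one_le_of_norm_eq_one {z : ℚ_[2]} (hz : ‖z‖ = 1) :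
    ‖z ^ 2 - 1‖ ≤ 2 ^ (-3 : ℤ) :=
  PadicInt.norm_sq_sub_one_le_of_isUnit (z := ⟨z, hz.le⟩) (PadicInt.isUnit_iff.mpr hz)

lemma modEq_one_of_norm_sq_sub_intCast_le {z : ℚ_[2]} {a : ℤ} (ha : Odd a)
    (h : ‖z ^ 2 - a‖ ≤ 2 ^ (-3 : ℤ)) : a ≡ 1 [ZMOD 8] := by
  have ha1 := norm_intCast_eq_one_of_odd ha
  have hz : ‖z‖ = 1 := by
    refine (pow_eq_one_iff_of_nonneg (norm_nonneg z) two_ne_zero).mp ?_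
    rw [← norm_pow, ← ha1]
    exact norm_eq_of_norm_sub_lt_right (h.trans_lt (by rw [ha1]; norm_num))
  rw [← norm_intCast_sub_le_iff_modEq, Int.cast_one, ← dist_eq_norm]
  refine (dist_triangle_max _ (z ^ 2) _).trans (max_le ?_ ?_)
  · rwa [dist_comm, dist_eq_norm]
  · rw [dist_eq_norm]
    exact norm_sq_sub_one_le_of_norm_eq_one hz

lemma norm_two_mul_sq_add_pow_four_le {t a b : ℚ_[2]} (ht : ‖t‖ < 1) (ha : ‖a‖ ≤ 1)
    (hb : ‖b‖ ≤ 1) : ‖2 * a * t ^ 2 + b * t ^ 4‖ ≤ 2 ^ (-3 : ℤ) := by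
  have ht' : ‖t‖ ≤ 2⁻¹ := by
    simpa using (norm_le_pow_iff_norm_lt_pow_add_one (p := 2) t (-1)).mpr (by simpa using ht)
  have ht0 := norm_nonneg t
  refine (IsUltrametricDist.norm_add_le_max _ _).trans (max_le ?_ ?_)
  · calc ‖2 * a * t ^ 2‖ = 2⁻¹ * ‖a‖ * ‖t‖ ^ 2 := by
          rw [norm_mul, norm_mul, norm_two, norm_pow]
      _ ≤ 2⁻¹ * 1 * (2⁻¹) ^ 2 := by gcongr
      _ = 2 ^ (-3 : ℤ) := by norm_num
  · calc ‖b * t ^ 4‖ = ‖b‖ * ‖t‖ ^ 4 := by rw [norm_mul, norm_pow]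
      _ ≤ 1 * (2⁻¹) ^ 4 := by gcongr
      _ ≤ 2 ^ (-3 : ℤ) := by norm_num

lemma norm_sq_ne_inv_two (y : ℚ_[2]) : ‖y‖ ^ 2 ≠ 2⁻¹ := by
  rcases eq_or_ne y 0 with rfl | hy
  · norm_num
  rw [norm_eq_zpow_neg_valuation hy, Nat.cast_ofNat, ← zpow_natCast, ← zpow_mul,
    ← zpow_neg_one]
  intro h
  have := zpow_right_injective₀ (by norm_num : (0 : ℝ) < 2) (by norm_num) h
  omega

section Quartic

variable {d c k : ℤ} {x y : ℚ_[2]}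

lemma neg_mul_modEq_one_of_norm_lt_one (hd : Odd d) (hc : Odd c)
    (h : y ^ 2 = d * x ^ 4 + 2 * k * x ^ 2 - c / d) (hx : ‖x‖ < 1) :
    -(d * c) ≡ 1 [ZMOD 8] := by
  have hd0 : (d : ℚ_[2]) ≠ 0 := Int.cast_ne_zero.mpr (by rintro rfl; simp at hd)
  refine modEq_one_of_norm_sq_sub_intCast_le (z := d * y) (hd.mul hc).neg ?_
  have key : (d * y) ^ 2 - ((-(d * c) : ℤ) : ℚ_[2]) =
      2 * (d ^ 2 * k) * x ^ 2 + d ^ 3 * x ^ 4 := by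
    rw [mul_pow, h]; push_cast; field_simp; ring
  rw [key]
  exact norm_two_mul_sq_add_pow_four_le hx (by exact_mod_cast norm_int_le_one _)
    (by exact_mod_cast norm_int_le_one _)

lemma modEq_one_of_one_lt_norm (hd : Odd d)
    (h : y ^ 2 = d * x ^ 4 + 2 * k * x ^ 2 - c / d) (hx : 1 < ‖x‖) : d ≡ 1 [ZMOD 8] := by
  have hx0 : x ≠ 0 := norm_pos_iff.mp (one_pos.trans hx)
  refine modEq_one_of_norm_sq_sub_intCast_le (z := y / x ^ 2) hd ?_
  have key : (y / x ^ 2) ^ 2 - d = 2 * k * x⁻¹ ^ 2 + -(c / d) * x⁻¹ ^ 4 := by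
    rw [div_pow, h]; field_simp; ring
  rw [key]
  refine norm_two_mul_sq_add_pow_four_le (by rw [norm_inv]; exact inv_lt_one_of_one_lt₀ hx)
    (norm_int_le_one _) ?_
  rw [norm_neg, norm_div, norm_intCast_eq_one_of_odd hd, div_one]
  exact norm_int_le_one _

lemma false_of_norm_eq_one (hd : Odd d) (hk : Odd k) (hc : c ≡ 1 [ZMOD 8])
    (h : y ^ 2 = d * x ^ 4 + 2 * k * x ^ 2 - c / d) (hx : ‖x‖ = 1) : False := by
  have hd1 := norm_intCast_eq_one_of_odd hd
  have hd0 : (d : ℚ_[2]) ≠ 0 := Int.cast_ne_zero.mpr (by rintro rfl; simp at hd)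
  have hsmall : ‖(d * x ^ 2) ^ 2 - c‖ < 2⁻¹ := by
    refine lt_of_le_of_lt ?_ (show (2 : ℝ) ^ (-3 : ℤ) < 2⁻¹ by norm_num)
    rw [← dist_eq_norm]
    refine (dist_triangle_max _ 1 _).trans (max_le ?_ ?_)
    · rw [dist_eq_norm]
      exact norm_sq_sub_one_le_of_norm_eq_one (by rw [norm_mul, norm_pow, hd1, hx]; norm_num)
    · rw [dist_eq_norm, ← Int.cast_one, norm_intCast_sub_le_iff_modEq]
      exact hc.symm
  have hlinear : ‖2 * d * k * x ^ 2‖ = 2⁻¹ := by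
    rw [norm_mul, norm_mul, norm_mul, norm_two, hd1, norm_intCast_eq_one_of_odd hk, norm_pow, hx]
    norm_num
  have key : d * y ^ 2 = ((d * x ^ 2) ^ 2 - c) + 2 * d * k * x ^ 2 := by
    rw [h]; field_simp; ring
  apply norm_sq_ne_inv_two y
  rw [← hlinear, ← norm_pow, ← one_mul ‖y ^ 2‖, ← hd1, ← norm_mul, key,
    IsUltrametricDist.norm_add_eq_max_of_norm_ne_norm, max_eq_right] <;> rw [hlinear]
  exacts [hsmall.le, hsmall.ne]

theorem sq_ne_quartic_of_modEq (hd : d % 8 = 3 ∨ d % 8 = 5) (hk : Odd k)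
    (hc : c ≡ 1 [ZMOD 8]) : y ^ 2 ≠ d * x ^ 4 + 2 * k * x ^ 2 - c / d := by
  intro h
  have hd' : Odd d := Int.odd_iff.mpr (by omega)
  have hc' : Odd c := Int.odd_iff.mpr (by unfold Int.ModEq at hc; omega)
  rcases lt_trichotomy ‖x‖ 1 with hx | hx | hx
  · have hdc := neg_mul_modEq_one_of_norm_lt_one hd' hc' h hx
    have hdc' := hc.mul_left d
    unfold Int.ModEq at hdc hdc'
    omega
  · exact false_of_norm_eq_one hd' hk hc h hx
  · have hd1 := modEq_one_of_one_lt_norm hd' h hx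
    unfold Int.ModEq at hd1
    omega

end Quartic

end Padic

theorem no_2adic_points_of_mod_eight_general (m n : ℕ)
    (hm_mod : m % 8 = 3) (hm2n_mod : (m + 2 * n) % 8 = 3)
    (d : ℤ) (hd_mod : d % 8 = 3 ∨ d % 8 = 5) :
    ¬ ∃ x y : ℚ_[2],
      y ^ 2 = (d : ℚ_[2]) * x ^ 4 + 2 * (m : ℚ_[2]) ^ 2 * x ^ 2 -
        (m : ℚ_[2]) ^ 3 * ((m : ℚ_[2]) + 2 * (n : ℚ_[2])) / (d : ℚ_[2]) := by
  rintro ⟨x, y, h⟩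
  have hm : (m : ℤ) ≡ 3 [ZMOD 8] := by unfold Int.ModEq; omega
  have hm2n : (m : ℤ) + 2 * n ≡ 3 [ZMOD 8] := by unfold Int.ModEq; omega
  have hm_odd : Odd (m : ℤ) := Int.odd_iff.mpr (by omega)
  have hc : (m : ℤ) ^ 3 * (m + 2 * n) ≡ 1 [ZMOD 8] := ((hm.pow 3).mul hm2n).trans (by decide)
  exact Padic.sq_ne_quartic_of_modEq (x := x) (y := y) hd_mod (hm_odd.pow (n := 2)) hc
    (by push_cast; exact h)

/-- Let `m` and `n` be positive integers with `m ≡ 3 (mod 8)` and `m + 2n ≡ 3 (mod 8)`,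
and let `d` be an odd integer with `d ≡ 3 (mod 8)` or `d ≡ 5 (mod 8)` (i.e.
`d ≡ ±3 (mod 8)`).  Then the affine model `y² = d·x⁴ + 2m²·x² − m³(m+2n)/d` of the
quartic curve `C′_d` has no `ℚ₂`-rational points. -/
theorem no_2adic_points_of_mod_eight (m n : ℕ) (hm : 0 < m) (hn : 0 < n)
    (hm_mod : m % 8 = 3) (hm2n_mod : (m + 2 * n) % 8 = 3)
    (d : ℤ) (hd_odd : Odd d) (hd_mod : d % 8 = 3 ∨ d % 8 = 5) :
    ¬ ∃ x y : ℚ_[2],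
      y ^ 2 = (d : ℚ_[2]) * x ^ 4 + 2 * (m : ℚ_[2]) ^ 2 * x ^ 2 -
        (m : ℚ_[2]) ^ 3 * ((m : ℚ_[2]) + 2 * (n : ℚ_[2])) / (d : ℚ_[2]) :=
  no_2adic_points_of_mod_eight_general m n hm_mod hm2n_mod d hd_mod
end

section
/- Let m and n be positive integers such that p := m+n is a prime with p ≡ 3 (mod 4) and p ≠ m. Then there is no pair (x, y) ∈ ℚ_p × ℚ_p satisfying y² = −x⁴ + 2m²·x² + m³(m+2n). (Note that −x⁴ + 2m²x² + m³(m+2n) = −(x² − m²)² + 2m³(m+n).) -/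
/-!
Writing `z = x² - m²`, the equation becomes `y² + z² = 2m³·p`. Since `p ≡ 3 (mod 4)`, `-1` is
not a square mod `p`, so `1 + t²` is a unit for every `p`-adic integer `t`; hence
`‖a² + b²‖ = max ‖a‖ ‖b‖²` in `ℚ_p`, which is `0` or an even power of `p`. But `p ∤ 2m³`,
so `‖2m³·p‖ = p⁻¹`.
-/

namespace PadicInt

variable {p : ℕ} [Fact p.Prime]

theorem isUnit_one_add_sq (hp : p % 4 = 3) (t : ℤ_[p]) : IsUnit (1 + t ^ 2) := by
  by_contra h
  have h0 : toZMod (1 + t ^ 2) = 0 := by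
    rw [← RingHom.mem_ker, ker_toZMod]
    exact (IsLocalRing.mem_maximalIdeal _).mpr h
  refine ZMod.mod_four_ne_three_of_sq_eq_neg_one (y := toZMod t) ?_ hp
  rw [map_add, map_one, map_pow] at h0
  linear_combination h0

end PadicInt

namespace Padic

variable {p : ℕ} [Fact p.Prime]

theorem norm_sq_add_sq (hp : p % 4 = 3) (a b : ℚ_[p]) :
    ‖a ^ 2 + b ^ 2‖ = max ‖a‖ ‖b‖ ^ 2 := by
  wlog hba : ‖b‖ ≤ ‖a‖ generalizing a b
  · rw [add_comm, max_comm]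
    exact this b a (le_of_not_ge hba)
  rw [max_eq_left hba]
  rcases eq_or_ne a 0 with rfl | ha
  · rw [norm_zero, norm_le_zero_iff] at hba
    simp [hba]
  have hq : ‖b / a‖ ≤ 1 := by
    rw [norm_div]
    exact div_le_one_of_le₀ hba (norm_nonneg a)
  obtain ⟨t, ht⟩ : ∃ t : ℤ_[p], (t : ℚ_[p]) = b / a := ⟨⟨b / a, hq⟩, rfl⟩
  have hunit : ‖1 + (b / a) ^ 2‖ = 1 := by
    rw [← ht]
    exact_mod_cast PadicInt.isUnit_iff.mp (PadicInt.isUnit_one_add_sq hp t)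
  calc ‖a ^ 2 + b ^ 2‖ = ‖a ^ 2 * (1 + (b / a) ^ 2)‖ := by congr 1; field_simp
    _ = ‖a‖ ^ 2 := by rw [norm_mul, norm_pow, hunit, mul_one]

theorem sq_norm_ne_inv_p (c : ℚ_[p]) : ‖c‖ ^ 2 ≠ (p : ℝ)⁻¹ := by
  have hp1 : (1 : ℝ) < p := mod_cast (Fact.out : p.Prime).one_lt
  rcases eq_or_ne c 0 with rfl | hc
  · rw [norm_zero, zero_pow two_ne_zero]
    exact (inv_pos.mpr (zero_lt_one.trans hp1)).ne
  rw [norm_eq_zpow_neg_valuation hc, ← zpow_natCast, ← zpow_mul, ← zpow_neg_one]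
  intro h
  have := zpow_right_injective₀ (by positivity) hp1.ne' h
  omega

theorem norm_sq_add_sq_ne_inv_p (hp : p % 4 = 3) (a b : ℚ_[p]) :
    ‖a ^ 2 + b ^ 2‖ ≠ (p : ℝ)⁻¹ := by
  rw [norm_sq_add_sq hp]
  rcases max_choice ‖a‖ ‖b‖ with h | h <;> rw [h] <;> exact sq_norm_ne_inv_p _

end Padic

theorem no_padic_points_d_neg_one_general (m n : ℕ) (hm : 0 < m) (hn : 0 < n)
    [hp : Fact (Nat.Prime (m + n))] (hp_mod : (m + n) % 4 = 3) :
    ¬ ∃ x y : ℚ_[m + n],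
      y ^ 2 = -x ^ 4 + 2 * (m : ℚ_[m + n]) ^ 2 * x ^ 2 +
        (m : ℚ_[m + n]) ^ 3 * ((m : ℚ_[m + n]) + 2 * (n : ℚ_[m + n])) := by
  rintro ⟨x, y, hxy⟩
  have hsum : y ^ 2 + (x ^ 2 - m ^ 2) ^ 2 =
      ((2 * m ^ 3 : ℕ) : ℚ_[m + n]) * ((m + n : ℕ) : ℚ_[m + n]) := by
    push_cast
    linear_combination hxy
  have hcop : (m + n).Coprime (2 * m ^ 3) := by
    refine Nat.Coprime.mul_right ?_ (Nat.Coprime.pow_right _ ?_)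
    · exact (Nat.coprime_primes hp.out Nat.prime_two).mpr (by omega)
    · exact (hp.out.coprime_iff_not_dvd).mpr fun h => by linarith [Nat.le_of_dvd hm h]
  have hnorm : ‖((2 * m ^ 3 : ℕ) : ℚ_[m + n]) * ((m + n : ℕ) : ℚ_[m + n])‖ =
      ((m + n : ℕ) : ℝ)⁻¹ := by
    rw [norm_mul, Padic.norm_natCast_eq_one_iff.mpr hcop, Padic.norm_p, one_mul]
  exact Padic.norm_sq_add_sq_ne_inv_p hp_mod y (x ^ 2 - m ^ 2) (hsum ▸ hnorm)

/-- Let `m` and `n` be positive integers such that `p := m + n` is a prime with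
`p ≡ 3 (mod 4)` and `p ≠ m`.  Then the affine model `y² = −x⁴ + 2m²·x² + m³(m+2n)`
of the quartic curve `C′_{-1}` has no `ℚ_p`-rational points. -/
theorem no_padic_points_d_neg_one (m n : ℕ) (hm : 0 < m) (hn : 0 < n)
    [hp : Fact (Nat.Prime (m + n))] (hp_mod : (m + n) % 4 = 3) (hp_ne : m + n ≠ m) :
    ¬ ∃ x y : ℚ_[m + n],
      y ^ 2 = -x ^ 4 + 2 * (m : ℚ_[m + n]) ^ 2 * x ^ 2 +
        (m : ℚ_[m + n]) ^ 3 * ((m : ℚ_[m + n]) + 2 * (n : ℚ_[m + n])) :=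
  no_padic_points_d_neg_one_general m n hm hn (hp := hp) hp_mod
end

section
/- Let m and n be positive integers such that m, m+n and m+2n are all primes congruent to 3 modulo 8. Let d be a squarefree integer with d ∉ {1, m(m+2n), −m(m+2n)}. Then there exists a prime p such that d is not a square in ℚ_p and there is no pair (x, y) ∈ ℚ_p × ℚ_p satisfying y² = d·x⁴ + 2m²·x² − m³(m+2n)/d. -/
/-!
Write `q = m + 2n`. If a prime `p ∤ mq` divides the squarefree `d`, then `v_p(d) = 1` and the
constant term `-m³q/d` has valuation `-1`; at any `ℚ_p`-point one term of the quartic then strictly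
dominates the others and has odd valuation, which a square cannot have. Otherwise
`d ∈ {-1, ±m, ±q}`. For `d = -1` take `p = m`: if `x⁻¹` is integral, reducing the reversed quartic
modulo `m` makes `-1` a square mod `m ≡ 3 (mod 4)`. For `d = ±m, ±q` take `p = 2`: there
`d ≡ ±3 (mod 8)`, and neither the quartic (for integral `x`) nor its reversal at `(2x)⁻¹` has a
solution modulo `8`.
-/

theorem IsSquare.quartic_inv {K : Type*} [Field K] {a b c x : K} (hx : x ≠ 0)
    (h : IsSquare (a * x ^ 4 + b * x ^ 2 + c)) :
    IsSquare (c * x⁻¹ ^ 4 + b * x⁻¹ ^ 2 + a) := by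
  obtain ⟨r, hr⟩ := h
  refine ⟨r * x⁻¹ ^ 2, ?_⟩
  calc c * x⁻¹ ^ 4 + b * x⁻¹ ^ 2 + a = (a * x ^ 4 + b * x ^ 2 + c) * (x⁻¹ ^ 2) ^ 2 := by
        field_simp; ring
    _ = r * x⁻¹ ^ 2 * (r * x⁻¹ ^ 2) := by rw [hr]; ring

namespace PadicInt

variable {p : ℕ} [Fact p.Prime]

theorem isSquare_of_isSquare_coe {T : ℤ_[p]} (h : IsSquare (T : ℚ_[p])) : IsSquare T := by
  obtain ⟨r, hr⟩ := h
  have hr1 : ‖r‖ ≤ 1 := by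
    have : ‖r‖ * ‖r‖ ≤ 1 := by
      rw [← norm_mul, ← hr, padic_norm_e_of_padicInt]
      exact T.norm_le_one
    nlinarith [norm_nonneg r]
  exact ⟨⟨r, hr1⟩, Subtype.ext hr⟩

theorem isSquare_map_of_isSquare_quartic {R : Type*} [CommRing R] (φ : ℤ_[p] →+* R)
    {a b c : ℤ} {X : ℤ_[p]} {s : ℚ_[p]} (hs : s = a * (X : ℚ_[p]) ^ 4 + b * (X : ℚ_[p]) ^ 2 + c)
    (h : IsSquare s) : IsSquare ((a : R) * φ X ^ 4 + b * φ X ^ 2 + c) := by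
  have hT : IsSquare ((a : ℤ_[p]) * X ^ 4 + b * X ^ 2 + c) :=
    isSquare_of_isSquare_coe (by simpa [hs] using h)
  simpa only [map_add, map_mul, map_pow, map_intCast] using hT.map φ

end PadicInt

namespace Padic

variable {p : ℕ} [hp : Fact p.Prime]

theorem valuation_eq_of_norm_eq {x y : ℚ_[p]} (hx : x ≠ 0) (hy : y ≠ 0) (h : ‖x‖ = ‖y‖) :
    x.valuation = y.valuation := by
  rw [norm_eq_zpow_neg_valuation hx, norm_eq_zpow_neg_valuation hy] at h
  exact neg_injective (zpow_right_injective₀ (mod_cast hp.out.pos) (mod_cast hp.out.ne_one) h)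

theorem norm_lt_norm_of_valuation_lt {x y : ℚ_[p]} (hx : x ≠ 0) (hy : y ≠ 0)
    (h : x.valuation < y.valuation) : ‖y‖ < ‖x‖ := by
  rw [norm_eq_zpow_neg_valuation hx, norm_eq_zpow_neg_valuation hy]
  exact zpow_lt_zpow_right₀ (mod_cast hp.out.one_lt) (neg_lt_neg h)

theorem valuation_neg (x : ℚ_[p]) : (-x).valuation = x.valuation := by
  rcases eq_or_ne x 0 with rfl | hx
  · simp
  exact valuation_eq_of_norm_eq (neg_ne_zero.2 hx) hx (norm_neg x)

theorem valuation_add_add_of_lt {a b c : ℚ_[p]} (ha : a ≠ 0) (hb : b ≠ 0) (hc : c ≠ 0)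
    (hab : a.valuation < b.valuation) (hac : a.valuation < c.valuation) :
    (a + b + c).valuation = a.valuation := by
  have hbc : ‖b + c‖ < ‖a‖ := (nonarchimedean b c).trans_lt
    (max_lt (norm_lt_norm_of_valuation_lt ha hb hab) (norm_lt_norm_of_valuation_lt ha hc hac))
  have hnorm : ‖a + b + c‖ = ‖a‖ := by
    rw [add_assoc, add_eq_max_of_ne hbc.ne', max_eq_left hbc.le]
  exact valuation_eq_of_norm_eq (norm_ne_zero_iff.1 (hnorm ▸ norm_ne_zero_iff.2 ha)) ha hnorm

theorem not_isSquare_of_odd_valuation {x : ℚ_[p]} (hx : Odd x.valuation) : ¬ IsSquare x := by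
  rintro ⟨r, rfl⟩
  rcases eq_or_ne r 0 with rfl | hr
  · simp at hx
  rw [valuation_mul hr hr, ← two_mul] at hx
  exact Int.not_odd_iff_even.2 (even_two_mul _) hx

theorem not_isSquare_add_add {a b c : ℚ_[p]} (ha : a ≠ 0) (hb : b ≠ 0) (hc : c ≠ 0)
    (hab : a.valuation < b.valuation) (hac : a.valuation < c.valuation)
    (hodd : Odd a.valuation) : ¬ IsSquare (a + b + c) :=
  not_isSquare_of_odd_valuation (by rwa [valuation_add_add_of_lt ha hb hc hab hac])

theorem not_isSquare_intCast {R : Type*} [CommRing R] (φ : ℤ_[p] →+* R) {a : ℤ}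
    (h : ¬ IsSquare (a : R)) : ¬ IsSquare (a : ℚ_[p]) := fun hsq =>
  h (by simpa using (PadicInt.isSquare_of_isSquare_coe (T := a) (by simpa using hsq)).map φ)

theorem not_isSquare_quartic_of_valuation {a b c : ℚ_[p]} (ha : a ≠ 0) (hb : b ≠ 0) (hc : c ≠ 0)
    (hva : a.valuation = 1) (hvb : 0 ≤ b.valuation) (hvc : c.valuation = -1) (x : ℚ_[p]) :
    ¬ IsSquare (a * x ^ 4 + b * x ^ 2 + c) := by
  intro hsq
  rcases eq_or_ne x 0 with rfl | hx
  · exact not_isSquare_of_odd_valuation (by rw [hvc]; decide) (by simpa using hsq)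
  have hax : a * x ^ 4 ≠ 0 := mul_ne_zero ha (pow_ne_zero 4 hx)
  have hbx : b * x ^ 2 ≠ 0 := mul_ne_zero hb (pow_ne_zero 2 hx)
  have hvax : (a * x ^ 4).valuation = 1 + 4 * x.valuation := by
    rw [valuation_mul ha (pow_ne_zero 4 hx), hva, valuation_pow]; push_cast; ring
  have hvbx : (b * x ^ 2).valuation = b.valuation + 2 * x.valuation := by
    rw [valuation_mul hb (pow_ne_zero 2 hx), valuation_pow]; push_cast; ring
  rcases le_or_gt 0 x.valuation with hx0 | hx0
  · refine not_isSquare_add_add hc hax hbx (by omega) (by omega) (by rw [hvc]; decide) ?_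
    convert hsq using 1; ring
  · exact not_isSquare_add_add hax hbx hc (by omega) (by omega) (Int.odd_iff.2 (by omega)) hsq

theorem not_isSquare_neg_quartic (hp4 : p % 4 = 3) {Q : ℤ} (hQ : ¬ (p : ℤ) ∣ Q) (x : ℚ_[p]) :
    ¬ IsSquare (-x ^ 4 + 2 * (p : ℚ_[p]) ^ 2 * x ^ 2 + p ^ 3 * Q) := by
  intro hsq
  have hp0 : (p : ℚ_[p]) ≠ 0 := Nat.cast_ne_zero.2 hp.out.ne_zero
  have hQ0 : (Q : ℚ_[p]) ≠ 0 := Int.cast_ne_zero.2 (by rintro rfl; exact hQ (dvd_zero _))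
  have hc : (p : ℚ_[p]) ^ 3 * Q ≠ 0 := mul_ne_zero (pow_ne_zero 3 hp0) hQ0
  have hvc : ((p : ℚ_[p]) ^ 3 * Q).valuation = 3 := by
    rw [valuation_mul (pow_ne_zero 3 hp0) hQ0, valuation_pow, valuation_p, valuation_intCast,
      padicValInt.eq_zero_of_not_dvd hQ]
    norm_num
  rcases eq_or_ne x 0 with rfl | hx
  · exact not_isSquare_of_odd_valuation (by rw [hvc]; decide) (by simpa using hsq)
  rcases lt_or_ge 0 x.valuation with hx0 | hx0
  · have h2p : (2 : ℚ_[p]) * (p : ℚ_[p]) ^ 2 ≠ 0 := mul_ne_zero two_ne_zero (pow_ne_zero 2 hp0)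
    have hv2 : 0 ≤ (2 : ℚ_[p]).valuation := by simp
    refine not_isSquare_add_add hc (neg_ne_zero.2 (pow_ne_zero 4 hx))
      (mul_ne_zero h2p (pow_ne_zero 2 hx)) ?_ ?_ (by rw [hvc]; decide)
      (by convert hsq using 1; ring)
    · rw [hvc, valuation_neg, valuation_pow]; push_cast; omega
    · rw [hvc, valuation_mul h2p (pow_ne_zero 2 hx), valuation_mul two_ne_zero (pow_ne_zero 2 hp0),
        valuation_pow, valuation_pow, valuation_p]
      push_cast; omega
  · have hz : ‖x⁻¹‖ ≤ 1 := (norm_le_one_iff_val_nonneg _).2 (by rw [valuation_inv]; omega)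
    have h := PadicInt.isSquare_map_of_isSquare_quartic PadicInt.toZMod (a := p ^ 3 * Q)
      (b := 2 * p ^ 2) (c := -1) (X := ⟨x⁻¹, hz⟩) (by push_cast; rfl)
      (IsSquare.quartic_inv hx (a := -1) (by rw [neg_one_mul]; exact hsq))
    refine (ZMod.exists_sq_eq_neg_one_iff (p := p)).1 ?_ hp4
    simpa using h

theorem not_isSquare_quartic_two {a b c : ℤ} (ha : (a : ZMod 8) = 3 ∨ (a : ZMod 8) = 5)
    (hb : (b : ZMod 8) = 2) (hac : (a : ZMod 8) * c = -1) (x : ℚ_[2]) :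
    ¬ IsSquare ((a : ℚ_[2]) * x ^ 4 + b * x ^ 2 + c) := by
  intro hsq
  let φ : ℤ_[2] →+* ZMod 8 := PadicInt.toZModPow 3
  rcases le_or_gt 0 x.valuation with hx | hx
  · obtain ⟨r, hr⟩ := PadicInt.isSquare_map_of_isSquare_quartic φ (a := a) (b := b) (c := c)
      (X := ⟨x, (norm_le_one_iff_val_nonneg x).2 hx⟩) (by push_cast; rfl) hsq
    rw [hb] at hr
    have key : ∀ a c u r : ZMod 8, (a = 3 ∨ a = 5) → a * c = -1 →
        a * u ^ 4 + 2 * u ^ 2 + c ≠ r * r := by decide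
    exact key _ _ _ _ ha hac hr
  · have hx0 : x ≠ 0 := by rintro rfl; simp at hx
    have hz : ‖(2 * x)⁻¹‖ ≤ 1 := (norm_le_one_iff_val_nonneg _).2 (by
      rw [valuation_inv, valuation_mul two_ne_zero hx0, valuation_ofNat, padicValNat_self]; omega)
    obtain ⟨r, hr⟩ := PadicInt.isSquare_map_of_isSquare_quartic φ (a := 16 * c) (b := 4 * b)
      (c := a) (X := ⟨(2 * x)⁻¹, hz⟩) (by push_cast; field_simp; ring)
      (IsSquare.quartic_inv hx0 hsq)
    push_cast [hb] at hr
    have key : ∀ a c u r : ZMod 8, (a = 3 ∨ a = 5) →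
        16 * c * u ^ 4 + 4 * 2 * u ^ 2 + a ≠ r * r := by decide
    exact key _ _ _ _ ha hr

end Padic

theorem padicValInt_eq_one_of_squarefree {p : ℕ} [hp : Fact p.Prime] {d : ℤ} (hd : Squarefree d)
    (hpd : (p : ℤ) ∣ d) : padicValInt p d = 1 := by
  have h1 := (padicValInt_dvd_iff 1 d).1 (by rwa [pow_one])
  have h2 : ¬ (p : ℤ) ^ 2 ∣ d := fun h =>
    (Nat.prime_iff_prime_int.1 hp.out).not_isUnit (hd _ (by rwa [← sq]))
  rw [padicValInt_dvd_iff 2 d] at h2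
  omega

theorem Nat.Prime.not_intCast_dvd_of_ne {r s : ℕ} (hr : r.Prime) (hs : s.Prime) (hrs : r ≠ s) :
    ¬ (r : ℤ) ∣ s := fun h =>
  hrs ((Nat.prime_dvd_prime_iff_eq hr hs).1 (Int.natCast_dvd_natCast.1 h))

theorem Nat.eq_one_or_eq_or_eq_or_eq_mul_of_squarefree {D p q : ℕ} (hD : Squarefree D)
    (hp : p.Prime) (hq : q.Prime) (h : ∀ r, r.Prime → r ∣ D → r = p ∨ r = q) :
    D = 1 ∨ D = p ∨ D = q ∨ D = p * q := by
  have hdvd : D ∣ p * q := by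
    rw [← Nat.prod_primeFactors_of_squarefree hD]
    refine Finset.prod_primes_dvd _ (fun r hr => (Nat.prime_of_mem_primeFactors hr).prime)
      fun r hr => ?_
    rcases h r (Nat.prime_of_mem_primeFactors hr) (Nat.dvd_of_mem_primeFactors hr) with rfl | rfl
    exacts [dvd_mul_right _ _, dvd_mul_left _ _]
  obtain ⟨a, b, ha, hb, rfl⟩ := Nat.dvd_mul.1 hdvd
  rcases (Nat.dvd_prime hp).1 ha with rfl | rfl <;>
    rcases (Nat.dvd_prime hq).1 hb with rfl | rfl <;> simp

/-- The curve `C'_d` of the theorem is the quartic below with `M = m` and `Q = m + 2n`. -/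
def HasPadicObstruction (p : ℕ) [Fact p.Prime] (M Q d : ℤ) : Prop :=
  ¬ IsSquare (d : ℚ_[p]) ∧
    ∀ x : ℚ_[p], ¬ IsSquare ((d : ℚ_[p]) * x ^ 4 + 2 * (M : ℚ_[p]) ^ 2 * x ^ 2 - M ^ 3 * Q / d)

open Padic

theorem hasPadicObstruction_of_valuation {p : ℕ} [hp : Fact p.Prime] {M Q d : ℤ}
    (hd : padicValInt p d = 1) (hM : ¬ (p : ℤ) ∣ M) (hQ : ¬ (p : ℤ) ∣ Q) :
    HasPadicObstruction p M Q d := by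
  have hpZ : Prime (p : ℤ) := Nat.prime_iff_prime_int.1 hp.out
  have hMQ : ¬ (p : ℤ) ∣ M ^ 3 * Q := fun h =>
    (hpZ.dvd_or_dvd h).elim (fun h => hM (hpZ.dvd_of_dvd_pow h)) hQ
  have hd0 : (d : ℚ_[p]) ≠ 0 := Int.cast_ne_zero.2 (by rintro rfl; simp at hd)
  have hvd : (d : ℚ_[p]).valuation = 1 := by rw [valuation_intCast, hd]; rfl
  have hMQ0 : ((M ^ 3 * Q : ℤ) : ℚ_[p]) ≠ 0 :=
    Int.cast_ne_zero.2 (by rintro h; exact hMQ (h ▸ dvd_zero _))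
  have hM0 : M ≠ 0 := by rintro rfl; exact hM (dvd_zero _)
  have hb0 : ((2 * M ^ 2 : ℤ) : ℚ_[p]) ≠ 0 := Int.cast_ne_zero.2 (by positivity)
  have hvb : 0 ≤ ((2 * M ^ 2 : ℤ) : ℚ_[p]).valuation := by
    rw [valuation_intCast]; exact Nat.cast_nonneg _
  have hc0 : -(((M ^ 3 * Q : ℤ) : ℚ_[p]) / d) ≠ 0 := neg_ne_zero.2 (div_ne_zero hMQ0 hd0)
  have hvc : (-(((M ^ 3 * Q : ℤ) : ℚ_[p]) / d)).valuation = -1 := by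
    rw [valuation_neg, div_eq_mul_inv, valuation_mul hMQ0 (inv_ne_zero hd0), valuation_inv, hvd,
      valuation_intCast, padicValInt.eq_zero_of_not_dvd hMQ]
    rfl
  refine ⟨not_isSquare_of_odd_valuation (by rw [hvd]; decide), fun x => ?_⟩
  convert not_isSquare_quartic_of_valuation hd0 hb0 hc0 hvd hvb hvc x using 2
  push_cast; ring

theorem hasPadicObstruction_neg_one {p : ℕ} [Fact p.Prime] (hp4 : p % 4 = 3) {Q : ℤ}
    (hQ : ¬ (p : ℤ) ∣ Q) : HasPadicObstruction p p Q (-1) := by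
  refine ⟨not_isSquare_intCast PadicInt.toZMod ?_, fun x => ?_⟩
  · rw [Int.cast_neg, Int.cast_one, ZMod.exists_sq_eq_neg_one_iff]
    omega
  · convert not_isSquare_neg_quartic hp4 hQ x using 2
    push_cast; ring

theorem hasPadicObstruction_two {M Q d : ℤ} (hd : d ∣ M ^ 3 * Q)
    (hd8 : (d : ZMod 8) = 3 ∨ (d : ZMod 8) = 5) (hMQ : (M : ZMod 8) ^ 3 * Q = 1) :
    HasPadicObstruction 2 M Q d := by
  obtain ⟨e, he⟩ := hd
  have hd0 : (d : ℚ_[2]) ≠ 0 := Int.cast_ne_zero.2 (by rintro rfl; revert hd8; decide)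
  have he2 : (M : ℚ_[2]) ^ 3 * Q / d = e := by
    rw [div_eq_iff hd0]; exact_mod_cast he.trans (mul_comm d e)
  have he8 : (M : ZMod 8) ^ 3 * Q = d * e := by exact_mod_cast congrArg (Int.cast : ℤ → ZMod 8) he
  refine ⟨not_isSquare_intCast (PadicInt.toZModPow 3 : ℤ_[2] →+* ZMod 8) ?_, fun x => ?_⟩
  · rcases hd8 with h | h <;> rw [h] <;> decide
  -- `M` is odd, so `M² ≡ 1 (mod 8)`.
  have hb : ((2 * M ^ 2 : ℤ) : ZMod 8) = 2 := by
    push_cast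
    exact (by decide : ∀ u v : ZMod 8, u ^ 3 * v = 1 → 2 * u ^ 2 = 2) _ _ hMQ
  have hde : (d : ZMod 8) * (-e : ℤ) = -1 := by
    rw [Int.cast_neg, mul_neg, ← he8, hMQ]
  convert not_isSquare_quartic_two hd8 hb hde x using 2
  rw [he2]; push_cast; ring

theorem exists_hasPadicObstruction_of_prime_dvd {m q : ℕ} (hm : m.Prime) (hq : q.Prime)
    (hm8 : m % 8 = 3) (hq8 : q % 8 = 3) (hmq : m ≠ q) {d : ℤ} (hd : Squarefree d) (hd1 : d ≠ 1)
    (hd2 : d ≠ m * q) (hd3 : d ≠ -(m * q)) (h : ∀ r, r.Prime → r ∣ d.natAbs → r = m ∨ r = q) :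
    ∃ p : ℕ, ∃ hp : p.Prime, haveI : Fact p.Prime := ⟨hp⟩; HasPadicObstruction p m q d := by
  have hm8' : (m : ZMod 8) = 3 := by rw [← ZMod.natCast_mod, hm8]; rfl
  have hq8' : (q : ZMod 8) = 3 := by rw [← ZMod.natCast_mod, hq8]; rfl
  have at_two : ∀ e : ℤ, e ∣ (m : ℤ) ^ 3 * q → (e : ZMod 8) = 3 ∨ (e : ZMod 8) = 5 →
      ∃ p : ℕ, ∃ hp : p.Prime, haveI : Fact p.Prime := ⟨hp⟩; HasPadicObstruction p m q e :=
    fun e he he8 => ⟨2, Nat.prime_two, hasPadicObstruction_two he he8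
      (by rw [Int.cast_natCast, Int.cast_natCast, hm8', hq8']; decide)⟩
  rcases Nat.eq_one_or_eq_or_eq_or_eq_mul_of_squarefree (Int.squarefree_natAbs.2 hd) hm hq h
    with h | h | h | h <;> rcases Int.natAbs_eq_iff.1 h with rfl | rfl
  · exact (hd1 rfl).elim
  · have := Fact.mk hm
    exact ⟨m, hm, hasPadicObstruction_neg_one (by omega) (hm.not_intCast_dvd_of_ne hq hmq)⟩
  · exact at_two _ (dvd_mul_of_dvd_left (dvd_pow_self _ three_ne_zero) _)
      (by rw [Int.cast_natCast, hm8']; decide)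
  · exact at_two _ (neg_dvd.2 (dvd_mul_of_dvd_left (dvd_pow_self _ three_ne_zero) _))
      (by rw [Int.cast_neg, Int.cast_natCast, hm8']; decide)
  · exact at_two _ (dvd_mul_left _ _) (by rw [Int.cast_natCast, hq8']; decide)
  · exact at_two _ (neg_dvd.2 (dvd_mul_left _ _))
      (by rw [Int.cast_neg, Int.cast_natCast, hq8']; decide)
  · exact (hd2 (by push_cast; ring)).elim
  · exact (hd3 (by push_cast; ring)).elim

theorem exists_padic_obstruction_general (m n : ℕ) (hn : 0 < n)
    (hm_prime : Nat.Prime m) (hm_mod : m % 8 = 3)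
    (hm2n_prime : Nat.Prime (m + 2 * n)) (hm2n_mod : (m + 2 * n) % 8 = 3)
    (d : ℤ) (hd_sf : Squarefree d)
    (hd1 : d ≠ 1) (hd2 : d ≠ (m : ℤ) * ((m : ℤ) + 2 * (n : ℤ)))
    (hd3 : d ≠ -((m : ℤ) * ((m : ℤ) + 2 * (n : ℤ)))) :
    ∃ p : ℕ, ∃ hp : Nat.Prime p,
      haveI : Fact p.Prime := ⟨hp⟩
      (¬ ∃ z : ℚ_[p], z ^ 2 = (d : ℚ_[p])) ∧
        ¬ ∃ x y : ℚ_[p],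
          y ^ 2 = (d : ℚ_[p]) * x ^ 4 + 2 * (m : ℚ_[p]) ^ 2 * x ^ 2 -
            (m : ℚ_[p]) ^ 3 * ((m : ℚ_[p]) + 2 * (n : ℚ_[p])) / (d : ℚ_[p]) := by
  suffices ∃ p : ℕ, ∃ hp : p.Prime, haveI : Fact p.Prime := ⟨hp⟩;
      HasPadicObstruction p m (m + 2 * n : ℕ) d by
    obtain ⟨p, hp, hsq, hC⟩ := this
    refine ⟨p, hp, fun ⟨z, hz⟩ => hsq ⟨z, by rw [← hz, sq]⟩, fun ⟨x, y, hxy⟩ => hC x ⟨y, ?_⟩⟩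
    rw [← sq, hxy]; push_cast; ring
  by_cases hfac : ∃ r, r.Prime ∧ r ∣ d.natAbs ∧ r ≠ m ∧ r ≠ m + 2 * n
  · obtain ⟨r, hr, hrd, hrm, hrq⟩ := hfac
    have := Fact.mk hr
    exact ⟨r, hr, hasPadicObstruction_of_valuation
      (padicValInt_eq_one_of_squarefree hd_sf (Int.natCast_dvd.2 hrd))
      (hr.not_intCast_dvd_of_ne hm_prime hrm) (hr.not_intCast_dvd_of_ne hm2n_prime hrq)⟩
  push Not at hfac
  exact exists_hasPadicObstruction_of_prime_dvd hm_prime hm2n_prime hm_mod hm2n_mod (by omega)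
    hd_sf hd1 (by push_cast; exact hd2) (by push_cast; exact hd3)
    fun r hr hrd => or_iff_not_imp_left.2 (hfac r hr hrd)

/-- Let `m` and `n` be positive integers such that `m`, `m + n` and `m + 2n` are all
primes congruent to `3` modulo `8`.  Let `d` be a squarefree integer with
`d ∉ {1, m(m+2n), −m(m+2n)}`.  Then there exists a prime `p` such that `d` is not a
square in `ℚ_p` and the affine model `y² = d·x⁴ + 2m²·x² − m³(m+2n)/d` of the quartic
curve `C′_d` has no `ℚ_p`-rational points. -/
theorem exists_padic_obstruction (m n : ℕ) (hm : 0 < m) (hn : 0 < n)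
    (hm_prime : Nat.Prime m) (hm_mod : m % 8 = 3)
    (hmn_prime : Nat.Prime (m + n)) (hmn_mod : (m + n) % 8 = 3)
    (hm2n_prime : Nat.Prime (m + 2 * n)) (hm2n_mod : (m + 2 * n) % 8 = 3)
    (d : ℤ) (hd_sf : Squarefree d)
    (hd1 : d ≠ 1) (hd2 : d ≠ (m : ℤ) * ((m : ℤ) + 2 * (n : ℤ)))
    (hd3 : d ≠ -((m : ℤ) * ((m : ℤ) + 2 * (n : ℤ)))) :
    ∃ p : ℕ, ∃ hp : Nat.Prime p,
      haveI : Fact p.Prime := ⟨hp⟩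
      (¬ ∃ z : ℚ_[p], z ^ 2 = (d : ℚ_[p])) ∧
        ¬ ∃ x y : ℚ_[p],
          y ^ 2 = (d : ℚ_[p]) * x ^ 4 + 2 * (m : ℚ_[p]) ^ 2 * x ^ 2 -
            (m : ℚ_[p]) ^ 3 * ((m : ℚ_[p]) + 2 * (n : ℚ_[p])) / (d : ℚ_[p]) :=
  exists_padic_obstruction_general m n hn hm_prime hm_mod hm2n_prime hm2n_mod d hd_sf hd1 hd2 hd3
end
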